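/- Let X be a geodesic metric space which is δ-hyperbolic (four-point condition) and let e ∈ X. Then: (i) there is a Morse gauge N₀, depending only on δ, such that every geodesic in X is N₀-Morse, so X^(N)_e = X for every Morse gauge N ≥ N₀; (ii) for every Morse gauge N, the map ∂X^(N)_e → ∂∞X induced by the inclusion X^(N)_e ⊆ X is, for any visual metrics, a quasi-symmetry onto its image, and for every N ≥ N₀ this map is a surjective quasi-symmetry. -/

import Mathlib

/-!
In a `δ`-hyperbolic geodesic space, a geodesic joining the ends of a chain of `n` steps of
length `≤ Δ` stays within `3δ ⌈log₂ n⌉ + Δ` of the chain: halve the chain and use thin triangles.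
Sample a `(K, C)`-quasi-geodesic at unit steps and let `D` be the largest distance from a point
`z` of the geodesic to the samples. Around `z` the geodesic can be bypassed by a detour through
the samples of length `O(D)` that stays at distance `≥ D` from `z`, so `D ≤ O(δ log D) + O(1)`,
which bounds `D` in terms of `δ, K, C`. A discrete intermediate value argument bounds the distance
back from the quasi-geodesic to the geodesic, which gives the Morse gauge `morseGauge δ`.

On the boundary, the four-point condition makes the Gromov product of two boundary points lie
within `2δ` of the liminf along any representing sequences, in `X^(N)_e` as in `X`. Hence two
visual metrics with parameters `ε` and `ε'` satisfy `d' ≍ d ^ (ε' / ε)` along the inclusion,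
which is therefore a power quasi-symmetry.
-/

open Set Filter

section Defs

variable {X : Type*} [MetricSpace X]

/-- A geodesic segment of length `L`, parametrized by arc length on `[0, L]`. -/
def IsGeodesicSeg (γ : ℝ → X) (L : ℝ) : Prop :=
  0 ≤ L ∧ ∀ s ∈ Icc (0:ℝ) L, ∀ t ∈ Icc (0:ℝ) L, dist (γ s) (γ t) = |s - t|

/-- A geodesic from `x` to `y`, parametrized by arc length on `[0, dist x y]`. -/
def IsGeodesicFromTo (γ : ℝ → X) (x y : X) : Prop :=
  IsGeodesicSeg γ (dist x y) ∧ γ 0 = x ∧ γ (dist x y) = y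

/-- A geodesic ray, parametrized by arc length on `[0, ∞)`. -/
def IsGeodesicRay (ℓ : ℝ → X) : Prop :=
  ∀ s ∈ Ici (0:ℝ), ∀ t ∈ Ici (0:ℝ), dist (ℓ s) (ℓ t) = |s - t|

/-- A geodesic metric space: any two points are joined by a geodesic. -/
def GeodesicSpace (X : Type*) [MetricSpace X] : Prop :=
  ∀ x y : X, ∃ γ : ℝ → X, IsGeodesicFromTo γ x y

/-- A `(K, C)`-quasi-geodesic defined on the interval `I ⊆ ℝ`. -/
def IsQuasiGeodesicOn (K C : ℝ) (I : Set ℝ) (σ : ℝ → X) : Prop :=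
  ∀ s ∈ I, ∀ t ∈ I,
    |s - t| / K - C ≤ dist (σ s) (σ t) ∧ dist (σ s) (σ t) ≤ K * |s - t| + C

/-- A Morse gauge: a nonnegative real `N K C` for every `K ≥ 1`, `C ≥ 0`. -/
def IsMorseGauge (N : ℝ → ℝ → ℝ) : Prop :=
  ∀ K C : ℝ, 1 ≤ K → 0 ≤ C → 0 ≤ N K C

/-- A subset `G ⊆ X` is `N`-Morse if for all `K ≥ 1`, `C ≥ 0`, every
`(K,C)`-quasi-geodesic with endpoints on `G` is contained in the closed
`N K C`-neighbourhood of `G`. -/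
def IsMorseSet (N : ℝ → ℝ → ℝ) (G : Set X) : Prop :=
  ∀ K C : ℝ, 1 ≤ K → 0 ≤ C → ∀ a b : ℝ, a ≤ b → ∀ σ : ℝ → X,
    IsQuasiGeodesicOn K C (Icc a b) σ → σ a ∈ G → σ b ∈ G →
    ∀ s ∈ Icc a b, ∃ g ∈ G, dist (σ s) g ≤ N K C

/-- An `N`-Morse geodesic from `x` to `y`. -/
def IsMorseGeodesicFromTo (N : ℝ → ℝ → ℝ) (γ : ℝ → X) (x y : X) : Prop :=
  IsGeodesicFromTo γ x y ∧ IsMorseSet N (γ '' Icc 0 (dist x y))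

/-- An `N`-Morse geodesic ray. -/
def IsMorseRay (N : ℝ → ℝ → ℝ) (ℓ : ℝ → X) : Prop :=
  IsGeodesicRay ℓ ∧ IsMorseSet N (ℓ '' Ici 0)

/-- The stratum `X^(N)_e`: points joined to `e` by an `N`-Morse geodesic. -/
def morseStratum (N : ℝ → ℝ → ℝ) (e : X) : Set X :=
  {y | ∃ γ : ℝ → X, IsMorseGeodesicFromTo N γ e y}

/-- The Gromov product `(x·y)_w`. -/
noncomputable def gprod (w x y : X) : ℝ := (dist w x + dist w y - dist x y) / 2

/-- A `B`-quasi-convex subset: geodesics with endpoints in `Y` stay in the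
closed `B`-neighbourhood of `Y`. -/
def IsQuasiConvex (B : ℝ) (Y : Set X) : Prop :=
  ∀ x ∈ Y, ∀ y ∈ Y, ∀ γ : ℝ → X, IsGeodesicFromTo γ x y →
    ∀ s ∈ Icc (0:ℝ) (dist x y), ∃ g ∈ Y, dist (γ s) g ≤ B

/-- An `N`-stable subset: quasi-convex, and any two of its points are joined
by an `N`-Morse geodesic of `X`. -/
def IsStableSubset (N : ℝ → ℝ → ℝ) (Y : Set X) : Prop :=
  (∃ B : ℝ, 0 ≤ B ∧ IsQuasiConvex B Y) ∧
    ∀ x ∈ Y, ∀ y ∈ Y, ∃ γ : ℝ → X, IsMorseGeodesicFromTo N γ x y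

variable {Y : Type*} [MetricSpace Y]

/-- A `(K,C)`-quasi-isometric embedding. -/
def IsQIEmbedding (K C : ℝ) (q : X → Y) : Prop :=
  ∀ x x' : X,
    dist x x' / K - C ≤ dist (q x) (q x') ∧ dist (q x) (q x') ≤ K * dist x x' + C

/-- A `(K,C)`-quasi-isometry. -/
def IsQuasiIsometry (K C : ℝ) (q : X → Y) : Prop :=
  IsQIEmbedding K C q ∧ ∀ y : Y, ∃ x : X, dist y (q x) ≤ C

end Defs

section Boundary

variable {X : Type*} [MetricSpace X]

/-- A sequence converges at infinity with respect to the basepoint `e`. -/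
def ConvAtInf (e : X) (f : ℕ → X) : Prop :=
  Tendsto (fun p : ℕ × ℕ => gprod e (f p.1) (f p.2)) atTop atTop

/-- Two sequences converging at infinity are equivalent. -/
def EquivAtInf (e : X) (f g : ℕ → X) : Prop :=
  Tendsto (fun p : ℕ × ℕ => gprod e (f p.1) (g p.2)) atTop atTop

/-- Sequences in `S` converging at infinity. -/
abbrev BSeq (S : Set X) (e : X) : Type _ :=
  {f : ℕ → X // (∀ n, f n ∈ S) ∧ ConvAtInf e f}

/-- The sequential boundary of `S ⊆ X` with basepoint `e`: sequences in `S`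
converging at infinity, up to equivalence. -/
def SeqBoundary (S : Set X) (e : X) : Type _ :=
  Quot (fun f g : BSeq S e => EquivAtInf e f.1 g.1)

/-- The boundary point represented by a convergent sequence. -/
def SeqBoundary.mk {S : Set X} {e : X} (f : BSeq S e) : SeqBoundary S e :=
  Quot.mk _ f

/-- The liminf of Gromov products of two sequences, valued in `EReal`. -/
noncomputable def seqGP (e : X) (f g : ℕ → X) : EReal :=
  Filter.liminf (fun p : ℕ × ℕ => ((gprod e (f p.1) (g p.2) : ℝ) : EReal)) atTop

/-- The Gromov product of two boundary points: the supremum over representing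
sequences of the liminf of Gromov products. -/
noncomputable def bGP (S : Set X) (e : X) (ξ η : SeqBoundary S e) : EReal :=
  sSup {r : EReal | ∃ f g : BSeq S e,
    SeqBoundary.mk f = ξ ∧ SeqBoundary.mk g = η ∧ r = seqGP e f.1 g.1}

open Classical in
/-- `exp (−ε·r)` for an extended real `r`, with value `0` at `r = ⊤`. -/
noncomputable def visGauge (ε : ℝ) (r : EReal) : ℝ :=
  if r = ⊤ then 0 else Real.exp (-ε * r.toReal)

/-- `d` is a visual metric on the sequential boundary of `S`:
a metric comparable to `exp(−ε·(Gromov product))` for some parameter `ε > 0`. -/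
def IsVisualMetric (S : Set X) (e : X)
    (d : SeqBoundary S e → SeqBoundary S e → ℝ) : Prop :=
  (∀ ξ η, 0 ≤ d ξ η) ∧ (∀ ξ η, d ξ η = d η ξ) ∧
  (∀ ξ η ζ, d ξ ζ ≤ d ξ η + d η ζ) ∧ (∀ ξ η, d ξ η = 0 ↔ ξ = η) ∧
  ∃ ε : ℝ, 0 < ε ∧ ∃ k₁ : ℝ, 0 < k₁ ∧ ∃ k₂ : ℝ, 0 < k₂ ∧
    ∀ ξ η, k₁ * visGauge ε (bGP S e ξ η) ≤ d ξ η ∧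
      d ξ η ≤ k₂ * visGauge ε (bGP S e ξ η)

/-- `η` is (the restriction of) a self-homeomorphism of `[0,∞)`. -/
def IsHomeoIci (η : ℝ → ℝ) : Prop :=
  ContinuousOn η (Ici 0) ∧ StrictMonoOn η (Ici 0) ∧ η 0 = 0 ∧
    Tendsto η atTop atTop ∧ ∀ t ∈ Ici (0:ℝ), 0 ≤ η t

/-- `F` is a quasi-symmetry onto its image, for the "distances" `dA`, `dB`. -/
def IsQuasiSymmetryOnto {A B : Type*} (dA : A → A → ℝ) (dB : B → B → ℝ)
    (F : A → B) : Prop :=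
  Function.Injective F ∧ ∃ η : ℝ → ℝ, IsHomeoIci η ∧
    ∀ x y z : A, x ≠ y → x ≠ z → y ≠ z →
      dB (F x) (F y) / dB (F x) (F z) ≤ η (dA x y / dA x z)

end Boundary

/-- `X` (with basepoint `x`) is stably subsumed by `Y` (with basepoint `y`):
every stratum of `X` quasi-isometrically embeds in some stratum of `Y`. -/
def StablySubsumed (X Y : Type*) [MetricSpace X] [MetricSpace Y]
    (x : X) (y : Y) : Prop :=
  ∀ N : ℝ → ℝ → ℝ, IsMorseGauge N →
    ∃ N' : ℝ → ℝ → ℝ, IsMorseGauge N' ∧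
      ∃ K C : ℝ, 1 ≤ K ∧ 0 ≤ C ∧ ∃ f : X → Y,
        (∀ a ∈ morseStratum N x, f a ∈ morseStratum N' y) ∧
        ∀ a ∈ morseStratum N x, ∀ b ∈ morseStratum N x,
          dist a b / K - C ≤ dist (f a) (f b) ∧ dist (f a) (f b) ≤ K * dist a b + C

/-- Durham–Taylor stability of `f : Y → X`. -/
def DTStable {Y X : Type*} [MetricSpace Y] [MetricSpace X] (f : Y → X) : Prop :=
  ∀ K C : ℝ, 1 ≤ K → 0 ≤ C → ∃ R : ℝ, 0 ≤ R ∧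
    ∀ a₁ b₁ a₂ b₂ : ℝ, a₁ ≤ b₁ → a₂ ≤ b₂ → ∀ σ₁ σ₂ : ℝ → X,
      IsQuasiGeodesicOn K C (Icc a₁ b₁) σ₁ → IsQuasiGeodesicOn K C (Icc a₂ b₂) σ₂ →
      σ₁ a₁ = σ₂ a₂ → σ₁ b₁ = σ₂ b₂ →
      σ₁ a₁ ∈ Set.range f → σ₁ b₁ ∈ Set.range f →
      (∀ s ∈ Icc a₁ b₁, ∃ t ∈ Icc a₂ b₂, dist (σ₁ s) (σ₂ t) ≤ R) ∧
      (∀ t ∈ Icc a₂ b₂, ∃ s ∈ Icc a₁ b₁, dist (σ₁ s) (σ₂ t) ≤ R)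

section Arithmetic

lemma clog_two_le_two_mul_sqrt_add_two (m : ℕ) : (Nat.clog 2 m : ℝ) ≤ 2 * √m + 2 := by
  have hm : Nat.clog 2 m ≤ 2 * (Nat.sqrt m + 1) := by
    rw [Nat.clog_le_iff_le_pow one_lt_two, pow_mul]
    calc m ≤ (Nat.sqrt m + 1) ^ 2 := (Nat.lt_succ_sqrt' m).le
      _ ≤ (2 ^ (Nat.sqrt m + 1)) ^ 2 := Nat.pow_le_pow_left (Nat.lt_two_pow_self).le 2
      _ = (2 ^ 2) ^ (Nat.sqrt m + 1) := by rw [← pow_mul, ← pow_mul, mul_comm]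
  calc (Nat.clog 2 m : ℝ) ≤ 2 * ((Nat.sqrt m : ℝ) + 1) := by exact_mod_cast hm
    _ ≤ 2 * √m + 2 := by linarith [Real.nat_sqrt_le_real_sqrt (a := m)]

lemma add_one_le_sq_of_le_add_mul_sqrt {D a b : ℝ} (hD : 0 ≤ D) (ha : 0 ≤ a) (hb : 0 ≤ b)
    (h : D ≤ a + b * √(D + 1)) : D + 1 ≤ (b + √(a + 1)) ^ 2 := by
  set s := √(D + 1)
  have hs : s ^ 2 = D + 1 := Real.sq_sqrt (by linarith)
  have hr : √(a + 1) ^ 2 = a + 1 := Real.sq_sqrt (by linarith)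
  have hs0 : 0 ≤ s := Real.sqrt_nonneg _
  have hr0 : 0 ≤ √(a + 1) := Real.sqrt_nonneg _
  have : s ≤ b + √(a + 1) := by nlinarith
  rw [← hs]
  exact pow_le_pow_left₀ hs0 this 2

lemma abs_min_sub_min_le (s t c : ℝ) : |min s c - min t c| ≤ |s - t| := by
  simpa using abs_min_sub_min_le_max s c t c

lemma exists_abs_sub_le_of_abs_sub_succ_le {r : ℕ → ℝ} {c s : ℝ} (m : ℕ)
    (hstep : ∀ k < m, |r (k + 1) - r k| ≤ c) (h0 : r 0 ≤ s + c) (hm : s - c ≤ r m) :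
    ∃ k ≤ m, |s - r k| ≤ c := by
  induction m with
  | zero => exact ⟨0, le_rfl, abs_sub_le_iff.2 ⟨by linarith, by linarith⟩⟩
  | succ m ih =>
    by_cases h : s - c ≤ r m
    · obtain ⟨k, hk, hk'⟩ := ih (fun k hk => hstep k (by omega)) h
      exact ⟨k, by omega, hk'⟩
    · have := (abs_sub_le_iff.1 (hstep m (by omega))).1
      exact ⟨m + 1, le_rfl, abs_sub_le_iff.2 ⟨by linarith, by linarith⟩⟩

end Arithmetic

def GromovHyperbolic (δ : ℝ) (X : Type*) [MetricSpace X] : Prop :=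
  ∀ w x y z : X, gprod w x y ≥ min (gprod w x z) (gprod w z y) - δ

section Geodesics

variable {X : Type*} [MetricSpace X] {δ : ℝ} {γ α β : ℝ → X} {x y q : X}

lemma gprod_nonneg (w x y : X) : 0 ≤ gprod w x y := by
  have := dist_triangle_left x y w
  unfold gprod
  linarith

lemma gprod_comm (w x y : X) : gprod w x y = gprod w y x := by
  unfold gprod
  rw [dist_comm x y]
  ring

lemma GromovHyperbolic.nonneg (hX : GromovHyperbolic δ X) (x : X) : 0 ≤ δ := by
  have := hX x x x x
  simp only [gprod, dist_self, min_self] at this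
  linarith

lemma IsGeodesicSeg.continuousOn {L : ℝ} (hγ : IsGeodesicSeg γ L) : ContinuousOn γ (Icc 0 L) :=
  (LipschitzOnWith.of_dist_le_mul (K := 1) fun s hs t ht => by
    simp [hγ.2 s hs t ht, Real.dist_eq]).continuousOn

lemma IsGeodesicSeg.restrict {L u v : ℝ} (hγ : IsGeodesicSeg γ L) (hu : 0 ≤ u) (huv : u ≤ v)
    (hv : v ≤ L) : IsGeodesicFromTo (fun w => γ (u + w)) (γ u) (γ v) := by
  have hd : dist (γ u) (γ v) = v - u := by
    rw [hγ.2 u ⟨hu, huv.trans hv⟩ v ⟨hu.trans huv, hv⟩, abs_of_nonpos (by linarith)]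
    ring
  refine ⟨⟨by rw [hd]; linarith, fun s hs t ht => ?_⟩, by simp, by simp [hd]⟩
  rw [hd] at hs ht
  rw [hγ.2 _ ⟨by linarith [hs.1], by linarith [hs.2]⟩ _ ⟨by linarith [ht.1], by linarith [ht.2]⟩]
  ring_nf

lemma IsGeodesicSeg.restrict_rev {L u v : ℝ} (hγ : IsGeodesicSeg γ L) (hv : 0 ≤ v) (hvu : v ≤ u)
    (hu : u ≤ L) : IsGeodesicFromTo (fun w => γ (u - w)) (γ u) (γ v) := by
  have hd : dist (γ u) (γ v) = u - v := by
    rw [hγ.2 u ⟨hv.trans hvu, hu⟩ v ⟨hv, hvu.trans hu⟩, abs_of_nonneg (by linarith)]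
  refine ⟨⟨by rw [hd]; linarith, fun s hs t ht => ?_⟩, by simp, by simp [hd]⟩
  rw [hd] at hs ht
  rw [hγ.2 _ ⟨by linarith [hs.2], by linarith [hs.1]⟩ _ ⟨by linarith [ht.2], by linarith [ht.1]⟩,
    ← abs_neg]
  ring_nf

namespace IsGeodesicFromTo

lemma dist_left (hγ : IsGeodesicFromTo γ x y) {u : ℝ} (hu : u ∈ Icc 0 (dist x y)) :
    dist (γ u) x = u := by
  rw [← hγ.2.1, hγ.1.2 u hu 0 ⟨le_rfl, dist_nonneg⟩, sub_zero, abs_of_nonneg hu.1]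

lemma dist_right (hγ : IsGeodesicFromTo γ x y) {u : ℝ} (hu : u ∈ Icc 0 (dist x y)) :
    dist (γ u) y = dist x y - u := by
  have h := hγ.1.2 u hu _ ⟨dist_nonneg, le_rfl⟩
  rw [hγ.2.2] at h
  rw [h, abs_of_nonpos (by linarith [hu.2])]
  ring

lemma gprod_eq_zero (hγ : IsGeodesicFromTo γ x y) {u : ℝ} (hu : u ∈ Icc 0 (dist x y)) :
    gprod (γ u) x y = 0 := by
  unfold gprod
  rw [hγ.dist_left hu, hγ.dist_right hu]
  ring

lemma exists_dist_le_gprod (hX : GromovHyperbolic δ X) (hγ : IsGeodesicFromTo γ x y) (p : X) :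
    ∃ u ∈ Icc 0 (dist x y), dist p (γ u) ≤ gprod p x y + 2 * δ := by
  -- `γ u` is the point with `dist (γ u) x - dist (γ u) y = dist p x - dist p y`
  set u := (dist x y + dist p x - dist p y) / 2 with hu_def
  have hu : u ∈ Icc 0 (dist x y) := by
    have := abs_sub_le_iff.1 (abs_dist_sub_le x y p)
    constructor <;> simp only [u, dist_comm p] <;> linarith
  refine ⟨u, hu, ?_⟩
  have h := hX (γ u) x y p
  rcases min_cases (gprod (γ u) x p) (gprod (γ u) p y) with ⟨hm, -⟩ | ⟨hm, -⟩ <;>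
  · rw [hm] at h
    simp only [gprod, hγ.dist_left hu, hγ.dist_right hu, dist_comm (γ u) p, dist_comm x p] at h ⊢
    linarith [hu_def]

end IsGeodesicFromTo

lemma exists_dist_le_gprod_of_triangle (hX : GromovHyperbolic δ X)
    (hα : IsGeodesicFromTo α x q) (hβ : IsGeodesicFromTo β q y) (z : X) :
    (∃ v ∈ Icc 0 (dist x q), dist z (α v) ≤ gprod z x y + 3 * δ) ∨
      (∃ v ∈ Icc 0 (dist q y), dist z (β v) ≤ gprod z x y + 3 * δ) := by
  have h := hX z x y q
  rcases le_total (gprod z x q) (gprod z q y) with hle | hle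
  · rw [min_eq_left hle] at h
    obtain ⟨v, hv, hd⟩ := hα.exists_dist_le_gprod hX z
    exact Or.inl ⟨v, hv, by linarith⟩
  · rw [min_eq_right hle] at h
    obtain ⟨v, hv, hd⟩ := hβ.exists_dist_le_gprod hX z
    exact Or.inr ⟨v, hv, by linarith⟩

lemma IsGeodesicFromTo.exists_dist_le_of_triangle (hX : GromovHyperbolic δ X)
    (hγ : IsGeodesicFromTo γ x y) {u : ℝ} (hu : u ∈ Icc 0 (dist x y))
    (hα : IsGeodesicFromTo α x q) (hβ : IsGeodesicFromTo β q y) :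
    (∃ v ∈ Icc 0 (dist x q), dist (γ u) (α v) ≤ 3 * δ) ∨
      (∃ v ∈ Icc 0 (dist q y), dist (γ u) (β v) ≤ 3 * δ) := by
  simpa [hγ.gprod_eq_zero hu] using exists_dist_le_gprod_of_triangle hX hα hβ (γ u)

lemma IsGeodesicFromTo.exists_dist_le_of_quadrilateral (hX : GromovHyperbolic δ X)
    (hG : GeodesicSpace X) {ζ : ℝ → X} {a b : X} (hγ : IsGeodesicFromTo γ x y) {u : ℝ}
    (hu : u ∈ Icc 0 (dist x y)) (hα : IsGeodesicFromTo α x a) (hβ : IsGeodesicFromTo β a b)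
    (hζ : IsGeodesicFromTo ζ b y) :
    (∃ v ∈ Icc 0 (dist x a), dist (γ u) (α v) ≤ 6 * δ) ∨
      (∃ v ∈ Icc 0 (dist a b), dist (γ u) (β v) ≤ 6 * δ) ∨
      (∃ v ∈ Icc 0 (dist b y), dist (γ u) (ζ v) ≤ 6 * δ) := by
  obtain ⟨θ, hθ⟩ := hG x b
  rcases hγ.exists_dist_le_of_triangle hX hu hθ hζ with ⟨v, hv, hd⟩ | ⟨v, hv, hd⟩
  · rcases hθ.exists_dist_le_of_triangle hX hv hα hβ with ⟨w, hw, hd'⟩ | ⟨w, hw, hd'⟩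
    · exact Or.inl ⟨w, hw, by linarith [dist_triangle (γ u) (θ v) (α w)]⟩
    · exact Or.inr (Or.inl ⟨w, hw, by linarith [dist_triangle (γ u) (θ v) (β w)]⟩)
  · exact Or.inr (Or.inr ⟨v, hv, by linarith [hX.nonneg x]⟩)

end Geodesics

section Chains

variable {X : Type*} [MetricSpace X] {δ : ℝ} {γ : ℝ → X} {x y : X}

theorem exists_dist_le_of_chain (hG : GeodesicSpace X) (hX : GromovHyperbolic δ X) {Δ : ℝ}
    (hΔ : 0 ≤ Δ) (n : ℕ) (q : ℕ → X) (hq : ∀ i < n, dist (q i) (q (i + 1)) ≤ Δ)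
    (hγ : IsGeodesicFromTo γ (q 0) (q n)) {u : ℝ} (hu : u ∈ Icc 0 (dist (q 0) (q n))) :
    ∃ i ≤ n, dist (γ u) (q i) ≤ 3 * δ * Nat.clog 2 n + Δ := by
  induction n using Nat.strong_induction_on generalizing q γ u with
  | _ n IH =>
  have hδ := hX.nonneg (q 0)
  rcases Nat.lt_or_ge n 2 with hn | hn
  · refine ⟨0, Nat.zero_le n, ?_⟩
    have hΔn : dist (q 0) (q n) ≤ Δ := by
      interval_cases n
      · simpa using hΔ
      · exact hq 0 one_pos
    rw [hγ.dist_left hu]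
    nlinarith [hu.2, (Nat.cast_nonneg (Nat.clog 2 n) : (0 : ℝ) ≤ _)]
  -- split the chain at `m = ⌈n/2⌉` and use a geodesic triangle on `q 0`, `q m`, `q n`
  set m := (n + 1) / 2
  have hclog : ((Nat.clog 2 n : ℕ) : ℝ) = Nat.clog 2 m + 1 := by
    rw [Nat.clog_of_two_le one_lt_two hn]
    push_cast
    rfl
  obtain ⟨α, hα⟩ := hG (q 0) (q m)
  obtain ⟨β, hβ⟩ := hG (q m) (q n)
  rcases hγ.exists_dist_le_of_triangle hX hu hα hβ with ⟨v, hv, hd⟩ | ⟨v, hv, hd⟩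
  · obtain ⟨i, hi, hdi⟩ := IH m (by omega) q (fun i hi => hq i (by omega)) hα hv
    refine ⟨i, by omega, ?_⟩
    rw [hclog]
    linarith [dist_triangle (γ u) (α v) (q i)]
  · have hβ' : IsGeodesicFromTo β (q (m + 0)) (q (m + (n - m))) := by
      rwa [Nat.add_zero, Nat.add_sub_cancel' (by omega)]
    have hv' : v ∈ Icc 0 (dist (q (m + 0)) (q (m + (n - m)))) := by
      rwa [Nat.add_zero, Nat.add_sub_cancel' (by omega)]
    obtain ⟨i, hi, hdi⟩ := IH (n - m) (by omega) (fun j => q (m + j))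
      (fun i hi => hq (m + i) (by omega)) hβ' hv'
    refine ⟨m + i, by omega, ?_⟩
    have hmono : (Nat.clog 2 (n - m) : ℝ) ≤ Nat.clog 2 m := by
      exact_mod_cast Nat.clog_mono_right 2 (by omega)
    rw [hclog]
    nlinarith [dist_triangle (γ u) (β v) (q (m + i))]

lemma exists_subchain {Δ : ℝ} {n : ℕ} {p : ℕ → X}
    (hstep : ∀ i < n, dist (p i) (p (i + 1)) ≤ Δ) {i j : ℕ} (hi : i ≤ n) (hj : j ≤ n) :
    ∃ q : ℕ → X, q 0 = p i ∧ q (Nat.dist i j) = p j ∧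
      (∀ k < Nat.dist i j, dist (q k) (q (k + 1)) ≤ Δ) ∧
      ∀ k ≤ Nat.dist i j, ∃ l ≤ n, q k = p l := by
  rcases le_total i j with hij | hji
  · rw [Nat.dist_eq_sub_of_le hij]
    exact ⟨fun k => p (i + k), rfl, by simp [Nat.add_sub_cancel' hij],
      fun k hk => hstep _ (by omega), fun k hk => ⟨i + k, by omega, rfl⟩⟩
  · rw [Nat.dist_eq_sub_of_le_right hji]
    refine ⟨fun k => p (i - k), by simp, by simp [Nat.sub_sub_self hji],
      fun k hk => ?_, fun k hk => ⟨i - k, by omega, rfl⟩⟩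
    have h := hstep (i - (k + 1)) (by omega)
    rwa [show i - (k + 1) + 1 = i - k by omega, dist_comm] at h

theorem le_of_forall_le_dist_detour (hG : GeodesicSpace X) (hX : GromovHyperbolic δ X)
    {Δ : ℝ} (hΔ : 0 ≤ Δ) {n : ℕ} {p : ℕ → X} (hstep : ∀ i < n, dist (p i) (p (i + 1)) ≤ Δ)
    {i₁ i₂ : ℕ} (hi₁ : i₁ ≤ n) (hi₂ : i₂ ≤ n) (hγ : IsGeodesicFromTo γ x y) {u : ℝ}
    (hu : u ∈ Icc 0 (dist x y)) {D : ℝ}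
    (h₁ : ∀ w, dist x w ≤ dist x (p i₁) → D ≤ dist (γ u) w)
    (h₂ : ∀ w, dist w y ≤ dist (p i₂) y → D ≤ dist (γ u) w)
    (hp : ∀ k ≤ n, D ≤ dist (γ u) (p k)) :
    D ≤ 6 * δ + 3 * δ * Nat.clog 2 (Nat.dist i₁ i₂) + Δ := by
  have hδ := hX.nonneg x
  have : (0 : ℝ) ≤ 3 * δ * Nat.clog 2 (Nat.dist i₁ i₂) := by positivity
  obtain ⟨q, hq0, hqm, hqstep, hqp⟩ := exists_subchain hstep hi₁ hi₂
  obtain ⟨α, hα⟩ := hG x (p i₁)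
  obtain ⟨β, hβ⟩ := hG (q 0) (q (Nat.dist i₁ i₂))
  obtain ⟨ζ, hζ⟩ := hG (p i₂) y
  have hβ' := hβ
  rw [hq0, hqm] at hβ'
  rcases hγ.exists_dist_le_of_quadrilateral hX hG hu hα hβ' hζ with
    ⟨v, hv, hd⟩ | ⟨v, hv, hd⟩ | ⟨v, hv, hd⟩
  · linarith [h₁ (α v) (by rw [dist_comm, hα.dist_left hv]; exact hv.2)]
  · rw [← hq0, ← hqm] at hv
    obtain ⟨k, hk, hdk⟩ := exists_dist_le_of_chain hG hX hΔ _ q hqstep hβ hv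
    obtain ⟨l, hl, hql⟩ := hqp k hk
    rw [hql] at hdk
    linarith [hp l hl, dist_triangle (γ u) (β v) (p l)]
  · linarith [h₂ (ζ v) (by rw [hζ.dist_right hv]; linarith [hv.1])]

lemma IsGeodesicFromTo.mem_or_le_dist_max {P : Set X} (hγ : IsGeodesicFromTo γ x y)
    (hx : x ∈ P) {u₀ D : ℝ} (hu₀ : u₀ ∈ Icc 0 (dist x y)) (hD : 0 ≤ D) :
    γ (max 0 (u₀ - 2 * D)) ∈ P ∨ 2 * D ≤ dist (γ u₀) (γ (max 0 (u₀ - 2 * D))) := by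
  rcases le_total (u₀ - 2 * D) 0 with h | h
  · rw [max_eq_left h, hγ.2.1]
    exact Or.inl hx
  · rw [max_eq_right h, hγ.1.2 _ hu₀ _ ⟨h, by linarith [hu₀.2]⟩, abs_of_nonneg (by linarith)]
    exact Or.inr (by linarith)

lemma IsGeodesicFromTo.mem_or_le_dist_min {P : Set X} (hγ : IsGeodesicFromTo γ x y)
    (hy : y ∈ P) {u₀ D : ℝ} (hu₀ : u₀ ∈ Icc 0 (dist x y)) (hD : 0 ≤ D) :
    γ (min (dist x y) (u₀ + 2 * D)) ∈ P ∨
      2 * D ≤ dist (γ u₀) (γ (min (dist x y) (u₀ + 2 * D))) := by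
  rcases le_total (dist x y) (u₀ + 2 * D) with h | h
  · rw [min_eq_left h, hγ.2.2]
    exact Or.inl hy
  · rw [min_eq_right h, hγ.1.2 _ hu₀ _ ⟨by linarith [hu₀.1], h⟩, abs_of_nonpos (by linarith)]
    exact Or.inr (by linarith)

-- solves `D ≤ 12δ + Δ + 6δ √(6A + B) √(D + 1)` for `D`, see `le_chainHullRadius`
noncomputable def chainHullRadius (δ Δ A B : ℝ) : ℝ :=
  (6 * δ * √(6 * A + B) + √(12 * δ + Δ + 1)) ^ 2

lemma exists_infDist_image_Iic_eq_dist (p : ℕ → X) (n : ℕ) (z : X) :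
    ∃ i ≤ n, Metric.infDist z (p '' Iic n) = dist z (p i) := by
  obtain ⟨_, ⟨i, hi, rfl⟩, h⟩ := ((finite_Iic n).image p).isCompact.exists_infDist_eq_dist
    ⟨p 0, 0, Nat.zero_le n, rfl⟩ z
  exact ⟨i, hi, h⟩

lemma le_dist_of_dist_le_infDist {P : Set X} {z c w : X} {D : ℝ}
    (hz : D ≤ Metric.infDist z P) (hcP : Metric.infDist c P ≤ D) (hc : c ∈ P ∨ 2 * D ≤ dist z c)
    (hw : dist c w ≤ Metric.infDist c P) : D ≤ dist z w := by
  rcases hc with hc | hc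
  · rw [Metric.infDist_zero_of_mem hc, dist_le_zero] at hw
    exact hw ▸ hz.trans (Metric.infDist_le_dist_of_mem hc)
  · linarith [dist_triangle z w c, dist_comm c w]

lemma le_chainHullRadius {Δ A B D : ℝ} {m : ℕ} (hδ : 0 ≤ δ) (hΔ : 0 ≤ Δ) (hA : 0 ≤ A)
    (hB : 0 ≤ B) (hD : 0 ≤ D) (hm : (m : ℝ) ≤ (6 * A + B) * (D + 1))
    (h : D ≤ 6 * δ + 3 * δ * Nat.clog 2 m + Δ) : D ≤ chainHullRadius δ Δ A B := by
  have hsqrt : √(m : ℝ) ≤ √(6 * A + B) * √(D + 1) := by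
    rw [← Real.sqrt_mul (by positivity)]
    exact Real.sqrt_le_sqrt hm
  have hD' : D ≤ 12 * δ + Δ + 6 * δ * √(6 * A + B) * √(D + 1) := by
    nlinarith [clog_two_le_two_mul_sqrt_add_two m]
  have := add_one_le_sq_of_le_add_mul_sqrt hD (by positivity : 0 ≤ 12 * δ + Δ)
    (by positivity : 0 ≤ 6 * δ * √(6 * A + B)) (by linarith)
  unfold chainHullRadius
  linarith

theorem infDist_le_chainHullRadius_of_isMaxOn (hG : GeodesicSpace X) (hX : GromovHyperbolic δ X)
    {Δ A B : ℝ} (hΔ : 0 ≤ Δ) (hA : 0 ≤ A) (hB : 0 ≤ B) {n : ℕ} {p : ℕ → X}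
    (hstep : ∀ i < n, dist (p i) (p (i + 1)) ≤ Δ)
    (hidx : ∀ i ≤ n, ∀ j ≤ n, (Nat.dist i j : ℝ) ≤ A * dist (p i) (p j) + B)
    (hγ : IsGeodesicFromTo γ (p 0) (p n)) {u₀ : ℝ} (hu₀ : u₀ ∈ Icc 0 (dist (p 0) (p n)))
    (hmax : ∀ v ∈ Icc 0 (dist (p 0) (p n)),
      Metric.infDist (γ v) (p '' Iic n) ≤ Metric.infDist (γ u₀) (p '' Iic n)) :
    Metric.infDist (γ u₀) (p '' Iic n) ≤ chainHullRadius δ Δ A B := by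
  set L := dist (p 0) (p n)
  set P := p '' Iic n
  set D := Metric.infDist (γ u₀) P
  have hD0 : 0 ≤ D := Metric.infDist_nonneg
  set u₁ := max 0 (u₀ - 2 * D)
  set u₂ := min L (u₀ + 2 * D)
  have hu₁ : u₁ ∈ Icc 0 L := ⟨le_max_left _ _, max_le dist_nonneg (by linarith [hu₀.2])⟩
  have hu₂ : u₂ ∈ Icc 0 L := ⟨le_min dist_nonneg (by linarith [hu₀.1]), min_le_left _ _⟩
  have hu₁₀ : u₁ ≤ u₀ := max_le hu₀.1 (by linarith)
  have hu₀₂ : u₀ ≤ u₂ := le_min hu₀.2 (by linarith)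
  obtain ⟨i₁, hi₁, h₁⟩ := exists_infDist_image_Iic_eq_dist p n (γ u₁)
  obtain ⟨i₂, hi₂, h₂⟩ := exists_infDist_image_Iic_eq_dist p n (γ u₂)
  have hfar₁ : ∀ w, dist (γ u₁) w ≤ dist (γ u₁) (p i₁) → D ≤ dist (γ u₀) w :=
    fun w hw => le_dist_of_dist_le_infDist le_rfl (hmax u₁ hu₁)
      (hγ.mem_or_le_dist_max (P := P) ⟨0, Nat.zero_le n, rfl⟩ hu₀ hD0) (h₁ ▸ hw)
  have hfar₂ : ∀ w, dist w (γ u₂) ≤ dist (p i₂) (γ u₂) → D ≤ dist (γ u₀) w :=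
    fun w hw => le_dist_of_dist_le_infDist le_rfl (hmax u₂ hu₂)
      (hγ.mem_or_le_dist_min (P := P) ⟨n, mem_Iic.2 le_rfl, rfl⟩ hu₀ hD0)
      (by rw [h₂, dist_comm, dist_comm (γ u₂)]; exact hw)
  have hu₁₂ : dist (γ u₁) (γ u₂) = u₂ - u₁ := by
    rw [hγ.1.2 _ hu₁ _ hu₂, abs_of_nonpos (by linarith)]
    ring
  refine le_chainHullRadius (hX.nonneg (p 0)) hΔ hA hB hD0 (m := Nat.dist i₁ i₂) ?_ ?_
  · have : dist (p i₁) (p i₂) ≤ 6 * D := by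
      have : u₂ ≤ u₀ + 2 * D := min_le_right _ _
      have : u₀ - 2 * D ≤ u₁ := le_max_right _ _
      linarith [dist_triangle4 (p i₁) (γ u₁) (γ u₂) (p i₂), dist_comm (p i₁) (γ u₁),
        dist_comm (p i₂) (γ u₂), h₁ ▸ hmax u₁ hu₁, h₂ ▸ hmax u₂ hu₂]
    nlinarith [hidx i₁ hi₁ i₂ hi₂]
  · -- bypass `γ u₀` by the detour `γ u₁ → p i₁ → p i₂ → γ u₂`, which stays `D`-far from it
    have hz : γ (u₁ + (u₀ - u₁)) = γ u₀ := by rw [add_sub_cancel]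
    rw [← hz] at hfar₁ hfar₂
    refine le_of_forall_le_dist_detour hG hX hΔ hstep hi₁ hi₂
      (hγ.1.restrict hu₁.1 (hu₁₀.trans hu₀₂) hu₂.2)
      ⟨by linarith, by rw [hu₁₂]; linarith⟩ hfar₁ hfar₂ fun k hk => ?_
    rw [hz]
    exact Metric.infDist_le_dist_of_mem ⟨k, hk, rfl⟩

theorem exists_dist_le_chainHullRadius (hG : GeodesicSpace X) (hX : GromovHyperbolic δ X)
    {Δ A B : ℝ} (hΔ : 0 ≤ Δ) (hA : 0 ≤ A) (hB : 0 ≤ B) {n : ℕ} {p : ℕ → X}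
    (hstep : ∀ i < n, dist (p i) (p (i + 1)) ≤ Δ)
    (hidx : ∀ i ≤ n, ∀ j ≤ n, (Nat.dist i j : ℝ) ≤ A * dist (p i) (p j) + B)
    (hγ : IsGeodesicFromTo γ (p 0) (p n)) {u : ℝ} (hu : u ∈ Icc 0 (dist (p 0) (p n))) :
    ∃ i ≤ n, dist (γ u) (p i) ≤ chainHullRadius δ Δ A B := by
  obtain ⟨i, hi, h⟩ := exists_infDist_image_Iic_eq_dist p n (γ u)
  obtain ⟨u₀, hu₀, hmax⟩ := isCompact_Icc.exists_isMaxOn (nonempty_Icc.2 dist_nonneg)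
    ((Metric.continuous_infDist_pt (p '' Iic n)).comp_continuousOn hγ.1.continuousOn)
  refine ⟨i, hi, h ▸ (hmax hu).trans ?_⟩
  exact infDist_le_chainHullRadius_of_isMaxOn hG hX hΔ hA hB hstep hidx hγ hu₀ fun v hv => hmax hv

end Chains

section QuasiGeodesics

variable {X : Type*} [MetricSpace X] {δ K C a b : ℝ} {σ γ : ℝ → X}

lemma IsQuasiGeodesicOn.abs_sub_le {I : Set ℝ} (hσ : IsQuasiGeodesicOn K C I σ) (hK : 0 < K)
    {s t : ℝ} (hs : s ∈ I) (ht : t ∈ I) : |s - t| ≤ K * (dist (σ s) (σ t) + C) := by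
  have : |s - t| / K ≤ dist (σ s) (σ t) + C := by linarith [(hσ s hs t ht).1]
  rwa [div_le_iff₀ hK, mul_comm] at this

lemma min_add_natCast_mem_Icc (hab : a ≤ b) (i : ℕ) : min (a + i) b ∈ Icc a b :=
  ⟨le_min (le_add_of_nonneg_right i.cast_nonneg) hab, min_le_right _ _⟩

lemma IsQuasiGeodesicOn.natDist_le_dist_sample (hσ : IsQuasiGeodesicOn K C (Icc a b) σ)
    (hK : 0 < K) (hab : a ≤ b) {i j : ℕ} (hi : i ≤ ⌈b - a⌉₊) (hj : j ≤ ⌈b - a⌉₊) :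
    (Nat.dist i j : ℝ) ≤ K * dist (σ (min (a + i) b)) (σ (min (a + j) b)) + (K * C + 1) := by
  have hclamp : ∀ k ≤ ⌈b - a⌉₊, a + k - 1 ≤ min (a + k) b := fun k hk =>
    le_min (by linarith) (by
      have := Nat.ceil_lt_add_one (sub_nonneg.2 hab)
      have : (k : ℝ) ≤ ⌈b - a⌉₊ := by exact_mod_cast hk
      linarith)
  have hnat : (Nat.dist i j : ℝ) ≤ |min (a + i) b - min (a + j) b| + 1 := by
    have := hclamp i hi
    have := hclamp j hj
    have := min_le_left (a + i) b
    have := min_le_left (a + j) b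
    rcases le_total i j with h | h
    · rw [Nat.dist_eq_sub_of_le h, Nat.cast_sub h]
      linarith [neg_abs_le (min (a + i) b - min (a + j) b)]
    · rw [Nat.dist_eq_sub_of_le_right h, Nat.cast_sub h]
      linarith [le_abs_self (min (a + i) b - min (a + j) b)]
  linarith [hσ.abs_sub_le hK (min_add_natCast_mem_Icc hab i) (min_add_natCast_mem_Icc hab j)]

lemma IsQuasiGeodesicOn.dist_sample_succ_le (hσ : IsQuasiGeodesicOn K C (Icc a b) σ)
    (hK : 0 ≤ K) (hab : a ≤ b) (i : ℕ) :
    dist (σ (min (a + i) b)) (σ (min (a + (i + 1 : ℕ)) b)) ≤ K + C := by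
  have h := (hσ _ (min_add_natCast_mem_Icc hab i) _ (min_add_natCast_mem_Icc hab (i + 1))).2
  have h1 : |min (a + i) b - min (a + (i + 1 : ℕ)) b| ≤ 1 :=
    (abs_min_sub_min_le _ _ _).trans (by push_cast; simp)
  linarith [mul_le_mul_of_nonneg_left h1 hK]

noncomputable def qgHullRadius (δ K C : ℝ) : ℝ := chainHullRadius δ (K + C) K (K * C + 1)

theorem IsQuasiGeodesicOn.exists_dist_le_qgHullRadius (hG : GeodesicSpace X)
    (hX : GromovHyperbolic δ X) (hK : 0 < K) (hC : 0 ≤ C) (hab : a ≤ b)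
    (hσ : IsQuasiGeodesicOn K C (Icc a b) σ) (hγ : IsGeodesicFromTo γ (σ a) (σ b)) {u : ℝ}
    (hu : u ∈ Icc 0 (dist (σ a) (σ b))) :
    ∃ τ ∈ Icc a b, dist (γ u) (σ τ) ≤ qgHullRadius δ K C := by
  set p : ℕ → X := fun i => σ (min (a + i) b)
  have hp0 : p 0 = σ a := by simp [p, hab]
  have hpn : p ⌈b - a⌉₊ = σ b := by
    simp only [p]
    rw [min_eq_right (by linarith [Nat.le_ceil (b - a)])]
  rw [← hp0, ← hpn] at hγ hu
  obtain ⟨i, -, hi⟩ := exists_dist_le_chainHullRadius hG hX (by linarith) hK.le (by positivity)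
    (fun i _ => hσ.dist_sample_succ_le hK.le hab i)
    (fun i hi j hj => hσ.natDist_le_dist_sample hK hab hi hj) hγ hu
  exact ⟨_, min_add_natCast_mem_Icc hab i, hi⟩

noncomputable def morseGauge (δ K C : ℝ) : ℝ :=
  qgHullRadius δ K C + C + K * (K * (2 * qgHullRadius δ K C + 1 + C))

lemma morseGauge_nonneg (δ : ℝ) {K C : ℝ} (hK : 0 ≤ K) (hC : 0 ≤ C) : 0 ≤ morseGauge δ K C := by
  have : 0 ≤ qgHullRadius δ K C := sq_nonneg _
  unfold morseGauge
  positivity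

theorem IsQuasiGeodesicOn.exists_dist_le_morseGauge (hG : GeodesicSpace X)
    (hX : GromovHyperbolic δ X) (hK : 0 < K) (hC : 0 ≤ C) (hab : a ≤ b)
    (hσ : IsQuasiGeodesicOn K C (Icc a b) σ) (hγ : IsGeodesicFromTo γ (σ a) (σ b)) {s : ℝ}
    (hs : s ∈ Icc a b) : ∃ v ∈ Icc 0 (dist (σ a) (σ b)), dist (σ s) (γ v) ≤ morseGauge δ K C := by
  set R := qgHullRadius δ K C
  set L := dist (σ a) (σ b)
  have hR : 0 ≤ R := sq_nonneg _
  have hw : ∀ k : ℕ, min (k : ℝ) L ∈ Icc 0 L :=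
    fun k => ⟨le_min k.cast_nonneg dist_nonneg, min_le_right _ _⟩
  choose τ hτ hdτ using fun k : ℕ => hσ.exists_dist_le_qgHullRadius hG hX hK hC hab hγ (hw k)
  set c := K * (2 * R + 1 + C)
  have hstep : ∀ k < ⌈L⌉₊, |τ (k + 1) - τ k| ≤ c := fun k _ => by
    have : dist (γ (min ((k + 1 : ℕ) : ℝ) L)) (γ (min (k : ℝ) L)) ≤ 1 := by
      rw [hγ.1.2 _ (hw _) _ (hw _)]
      exact (abs_min_sub_min_le _ _ _).trans (by push_cast; simp)
    have := hσ.abs_sub_le hK (hτ (k + 1)) (hτ k)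
    have := dist_triangle4 (σ (τ (k + 1))) (γ (min ((k + 1 : ℕ) : ℝ) L)) (γ (min (k : ℝ) L))
      (σ (τ k))
    nlinarith [hdτ k, hdτ (k + 1), dist_comm (σ (τ (k + 1))) (γ (min ((k + 1 : ℕ) : ℝ) L))]
  have hend : ∀ k : ℕ, ∀ t ∈ Icc a b, γ (min (k : ℝ) L) = σ t → |τ k - t| ≤ c := by
    intro k t ht h
    have := hσ.abs_sub_le hK (hτ k) ht
    rw [← h, dist_comm] at this
    nlinarith [hdτ k]
  have h0 : τ 0 ≤ s + c := by
    have := hend 0 a ⟨le_rfl, hab⟩ (by rw [Nat.cast_zero, min_eq_left dist_nonneg, hγ.2.1])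
    linarith [(abs_sub_le_iff.1 this).1, hs.1]
  have hm : s - c ≤ τ ⌈L⌉₊ := by
    have := hend ⌈L⌉₊ b ⟨hab, le_rfl⟩ (by rw [min_eq_right (Nat.le_ceil L), hγ.2.2])
    linarith [(abs_sub_le_iff.1 this).2, hs.2]
  obtain ⟨k, -, hk⟩ := exists_abs_sub_le_of_abs_sub_succ_le _ hstep h0 hm
  refine ⟨_, hw k, ?_⟩
  have := (hσ s hs (τ k) (hτ k)).2
  have := dist_triangle (σ s) (σ (τ k)) (γ (min (k : ℝ) L))
  unfold morseGauge
  nlinarith [hdτ k, dist_comm (σ (τ k)) (γ (min (k : ℝ) L))]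

end QuasiGeodesics

section Morse

variable {X : Type*} [MetricSpace X] {δ : ℝ}

lemma IsMorseSet.mono {N N' : ℝ → ℝ → ℝ} {G : Set X} (h : IsMorseSet N G)
    (hN : ∀ K C, N K C ≤ N' K C) : IsMorseSet N' G := by
  intro K C hK hC a b hab σ hσ ha hb s hs
  obtain ⟨g, hg, hd⟩ := h K C hK hC a b hab σ hσ ha hb s hs
  exact ⟨g, hg, hd.trans (hN K C)⟩

theorem IsGeodesicSeg.isMorseSet_morseGauge (hG : GeodesicSpace X) (hX : GromovHyperbolic δ X)
    {γ : ℝ → X} {L : ℝ} (hγ : IsGeodesicSeg γ L) : IsMorseSet (morseGauge δ) (γ '' Icc 0 L) := by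
  rintro K C hK hC a b hab σ hσ ⟨s₀, hs₀, hσa⟩ ⟨t₀, ht₀, hσb⟩ s hs
  rcases le_total s₀ t₀ with hst | hts
  · have hγ' := hγ.restrict hs₀.1 hst ht₀.2
    rw [hσa, hσb] at hγ'
    obtain ⟨v, hv, hd⟩ := hσ.exists_dist_le_morseGauge hG hX (by linarith) hC hab hγ' hs
    rw [← hσa, ← hσb, hγ.2 _ hs₀ _ ht₀, abs_of_nonpos (by linarith)] at hv
    exact ⟨_, ⟨s₀ + v, ⟨by linarith [hs₀.1, hv.1], by linarith [hv.2, ht₀.2]⟩, rfl⟩, hd⟩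
  · have hγ' := hγ.restrict_rev ht₀.1 hts hs₀.2
    rw [hσa, hσb] at hγ'
    obtain ⟨v, hv, hd⟩ := hσ.exists_dist_le_morseGauge hG hX (by linarith) hC hab hγ' hs
    rw [← hσa, ← hσb, hγ.2 _ hs₀ _ ht₀, abs_of_nonneg (by linarith)] at hv
    exact ⟨_, ⟨s₀ - v, ⟨by linarith [ht₀.1, hv.2], by linarith [hv.1, hs₀.2]⟩, rfl⟩, hd⟩

theorem morseStratum_eq_univ (hG : GeodesicSpace X) (hX : GromovHyperbolic δ X) (e : X)
    {N : ℝ → ℝ → ℝ} (hN : ∀ K C, morseGauge δ K C ≤ N K C) : morseStratum N e = univ := by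
  refine eq_univ_of_forall fun y => ?_
  obtain ⟨γ, hγ⟩ := hG e y
  exact ⟨γ, hγ, (hγ.1.isMorseSet_morseGauge hG hX).mono hN⟩

end Morse

section QuasiSymmetry

lemma visGauge_nonneg (ε : ℝ) (r : EReal) : 0 ≤ visGauge ε r := by
  unfold visGauge
  split_ifs <;> positivity

lemma visGauge_rpow {ε p : ℝ} (hp : 0 < p) (r : EReal) : visGauge ε r ^ p = visGauge (ε * p) r := by
  unfold visGauge
  split_ifs
  · exact Real.zero_rpow hp.ne'
  · rw [← Real.exp_mul]
    ring_nf

lemma visGauge_le_exp_mul_visGauge {ε c : ℝ} {r r' : EReal} (hε : 0 ≤ ε) (hr : 0 ≤ r)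
    (h : r ≤ r' + c) : visGauge ε r' ≤ Real.exp (ε * c) * visGauge ε r := by
  induction r' using EReal.rec with
  | top => simpa [visGauge] using mul_nonneg (Real.exp_pos _).le (visGauge_nonneg ε r)
  | bot =>
    rw [EReal.bot_add, le_bot_iff] at h
    simp [h] at hr
  | coe a' =>
    induction r using EReal.rec with
    | top => simp [← EReal.coe_add] at h
    | bot => simp at hr
    | coe a =>
      have h : a ≤ a' + c := by exact_mod_cast h
      simp only [visGauge, EReal.coe_ne_top, if_false, EReal.toReal_coe, ← Real.exp_add]
      exact Real.exp_le_exp.2 (by nlinarith)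

lemma isHomeoIci_const_mul_rpow {Λ p : ℝ} (hΛ : 0 < Λ) (hp : 0 < p) :
    IsHomeoIci fun t => Λ * t ^ p :=
  ⟨fun t _ => (continuousAt_const.mul
      (Real.continuousAt_rpow_const t p (Or.inr hp.le))).continuousWithinAt,
    fun _ hx _ _ hxy => mul_lt_mul_of_pos_left (Real.rpow_lt_rpow hx hxy hp) hΛ,
    by simp [Real.zero_rpow hp.ne'],
    (tendsto_rpow_atTop hp).const_mul_atTop hΛ,
    fun _ ht => mul_nonneg hΛ.le (Real.rpow_nonneg ht _)⟩

theorem isQuasiSymmetryOnto_of_comparable_rpow {A B : Type*} {dA : A → A → ℝ}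
    {dB : B → B → ℝ} {F : A → B} (hF : Function.Injective F) {g : A → A → ℝ}
    {k₁ k₂ k₁' k₂' p : ℝ} (hg : ∀ x y, 0 ≤ g x y) (hk₁ : 0 < k₁) (hk₂ : 0 < k₂)
    (hk₁' : 0 < k₁') (hk₂' : 0 < k₂') (hp : 0 < p)
    (hA : ∀ x y, k₁ * g x y ≤ dA x y ∧ dA x y ≤ k₂ * g x y)
    (hB : ∀ x y, k₁' * g x y ^ p ≤ dB (F x) (F y) ∧ dB (F x) (F y) ≤ k₂' * g x y ^ p) :
    IsQuasiSymmetryOnto dA dB F := by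
  refine ⟨hF, _, isHomeoIci_const_mul_rpow (Λ := k₂' / k₁' * (k₂ / k₁) ^ p) (by positivity) hp,
    fun x y z _ _ _ => ?_⟩
  have hdA : ∀ x y, 0 ≤ dA x y := fun x y => (mul_nonneg hk₁.le (hg x y)).trans (hA x y).1
  rcases (hg x z).eq_or_lt with hz | hz
  · have : dB (F x) (F z) = 0 := by
      have := hB x z
      simp only [← hz, Real.zero_rpow hp.ne', mul_zero] at this
      exact le_antisymm this.2 this.1
    rw [this, div_zero]
    exact mul_nonneg (by positivity) (Real.rpow_nonneg (div_nonneg (hdA x y) (hdA x z)) _)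
  have hgxy : g x y ≤ dA x y / k₁ := (le_div_iff₀ hk₁).2 (by linarith [(hA x y).1])
  have hgxz : dA x z / k₂ ≤ g x z := (div_le_iff₀ hk₂).2 (by linarith [(hA x z).2])
  have hdxz : 0 < dA x z := by nlinarith [(hA x z).1]
  calc dB (F x) (F y) / dB (F x) (F z)
      ≤ k₂' * g x y ^ p / (k₁' * g x z ^ p) :=
        div_le_div₀ (mul_nonneg hk₂'.le (Real.rpow_nonneg (hg x y) _)) (hB x y).2
          (mul_pos hk₁' (Real.rpow_pos_of_pos hz _)) (hB x z).1
    _ = k₂' / k₁' * (g x y / g x z) ^ p := by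
        rw [Real.div_rpow (hg x y) hz.le, mul_div_mul_comm]
    _ ≤ k₂' / k₁' * ((dA x y / k₁) / (dA x z / k₂)) ^ p :=
        mul_le_mul_of_nonneg_left (Real.rpow_le_rpow (div_nonneg (hg x y) hz.le)
          (div_le_div₀ (div_nonneg (hdA x y) hk₁.le) hgxy (div_pos hdxz hk₂) hgxz) hp.le)
          (by positivity)
    _ = k₂' / k₁' * (k₂ / k₁) ^ p * (dA x y / dA x z) ^ p := by
        rw [mul_assoc, ← Real.mul_rpow (by positivity) (div_nonneg (hdA x y) hdxz.le)]
        congr 2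
        field_simp

end QuasiSymmetry

section SequentialBoundary

variable {X : Type*} [MetricSpace X] {δ : ℝ} {e : X} {S T : Set X}

lemma equivAtInf_iff {f g : ℕ → X} :
    EquivAtInf e f g ↔ ∀ M, ∃ N : ℕ, ∀ i j, N ≤ i → N ≤ j → M ≤ gprod e (f i) (g j) := by
  simp only [EquivAtInf, tendsto_atTop, eventually_atTop_prod_self]

lemma EquivAtInf.symm {f g : ℕ → X} (h : EquivAtInf e f g) : EquivAtInf e g f := by
  rw [equivAtInf_iff] at h ⊢
  exact fun M => (h M).imp fun N hN i j hi hj => gprod_comm e (f j) (g i) ▸ hN j i hj hi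

lemma EquivAtInf.trans (hX : GromovHyperbolic δ X) {f g h : ℕ → X} (hfg : EquivAtInf e f g)
    (hgh : EquivAtInf e g h) : EquivAtInf e f h := by
  rw [equivAtInf_iff] at *
  intro M
  obtain ⟨N₁, h₁⟩ := hfg (M + δ)
  obtain ⟨N₂, h₂⟩ := hgh (M + δ)
  refine ⟨max N₁ N₂, fun i j hi hj => ?_⟩
  have := le_min (h₁ i (max N₁ N₂) (le_of_max_le_left hi) (le_max_left _ _))
    (h₂ (max N₁ N₂) j (le_max_right _ _) (le_of_max_le_right hj))
  linarith [hX e (f i) (h j) (g (max N₁ N₂))]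

lemma SeqBoundary.mk_eq_mk_iff (hX : GromovHyperbolic δ X) {f g : BSeq S e} :
    SeqBoundary.mk f = SeqBoundary.mk g ↔ EquivAtInf e f.1 g.1 :=
  Quot.eq.trans (Equivalence.eqvGen_iff ⟨fun f => f.2.2, EquivAtInf.symm, EquivAtInf.trans hX⟩)

lemma seqGP_nonneg (f g : ℕ → X) : 0 ≤ seqGP e f g :=
  le_liminf_of_le (by isBoundedDefault)
    (.of_forall fun _ => EReal.coe_nonneg.2 (gprod_nonneg _ _ _))

lemma seqGP_le_seqGP_add (hX : GromovHyperbolic δ X) {f g f' g' : ℕ → X}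
    (hf : EquivAtInf e f f') (hg : EquivAtInf e g g') :
    seqGP e f g ≤ seqGP e f' g' + ((2 * δ : ℝ) : EReal) := by
  refine EReal.ge_of_forall_gt_iff_ge.1 fun c hc => ?_
  -- compare `f' i`, `g' j` with `f k`, `g k` for one `k` such that `(f k · g k)_e > c`
  obtain ⟨P, hP⟩ := eventually_atTop_prod_self.1 (eventually_lt_of_lt_liminf hc)
  obtain ⟨N₁, h₁⟩ := equivAtInf_iff.1 hf c
  obtain ⟨N₂, h₂⟩ := equivAtInf_iff.1 hg c
  set k := max P (max N₁ N₂)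
  have hk : c ≤ gprod e (f k) (g k) :=
    (EReal.coe_lt_coe_iff.1 (hP k k (le_max_left _ _) (le_max_left _ _))).le
  have : ((c - 2 * δ : ℝ) : EReal) ≤ seqGP e f' g' := by
    refine le_liminf_of_le (by isBoundedDefault) (eventually_atTop_prod_self.2 ⟨max N₁ N₂, ?_⟩)
    intro i j hi hj
    have hfk := h₁ k i ((le_max_left _ _).trans (le_max_right _ _)) (le_of_max_le_left hi)
    have hgk := h₂ k j ((le_max_right _ _).trans (le_max_right _ _)) (le_of_max_le_right hj)
    rw [gprod_comm] at hfk
    have hkj : c - δ ≤ gprod e (f k) (g' j) := by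
      linarith [hX e (f k) (g' j) (g k), le_min hk hgk]
    have := le_min (show c - δ ≤ gprod e (f' i) (f k) by linarith [hX.nonneg e]) hkj
    exact EReal.coe_le_coe_iff.2 (by linarith [hX e (f' i) (g' j) (f k)])
  calc (c : EReal) = ((c - 2 * δ : ℝ) : EReal) + ((2 * δ : ℝ) : EReal) := by
        rw [← EReal.coe_add, sub_add_cancel]
    _ ≤ seqGP e f' g' + ((2 * δ : ℝ) : EReal) := by gcongr

def BSeq.inclusion (hST : S ⊆ T) (f : BSeq S e) : BSeq T e :=
  ⟨f.1, fun n => hST (f.2.1 n), f.2.2⟩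

namespace SeqBoundary

lemma seqGP_le_bGP (f g : BSeq S e) : seqGP e f.1 g.1 ≤ bGP S e (mk f) (mk g) :=
  le_sSup ⟨f, g, rfl, rfl, rfl⟩

lemma bGP_le_seqGP_add (hX : GromovHyperbolic δ X) (f g : BSeq S e) :
    bGP S e (mk f) (mk g) ≤ seqGP e f.1 g.1 + ((2 * δ : ℝ) : EReal) := by
  refine sSup_le ?_
  rintro r ⟨f', g', hf', hg', rfl⟩
  exact seqGP_le_seqGP_add hX ((mk_eq_mk_iff hX).1 hf') ((mk_eq_mk_iff hX).1 hg')

lemma bGP_nonneg (ξ η : SeqBoundary S e) : 0 ≤ bGP S e ξ η := by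
  induction ξ using Quot.ind
  induction η using Quot.ind
  exact (seqGP_nonneg _ _).trans (seqGP_le_bGP _ _)

def inclusion (hST : S ⊆ T) : SeqBoundary S e → SeqBoundary T e :=
  Quot.lift (fun f => mk (BSeq.inclusion hST f)) fun _ _ h => Quot.sound h

lemma inclusion_mk (hST : S ⊆ T) (f : BSeq S e) (g : BSeq T e) (h : ∀ n, g.1 n = f.1 n) :
    inclusion hST (mk f) = mk g :=
  congrArg mk (Subtype.ext (funext fun n => (h n).symm))

lemma inclusion_injective (hX : GromovHyperbolic δ X) (hST : S ⊆ T) :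
    Function.Injective (inclusion (e := e) hST) := by
  intro ξ η h
  induction ξ using Quot.ind with | mk f => ?_
  induction η using Quot.ind with | mk g => ?_
  exact Quot.sound ((mk_eq_mk_iff (f := BSeq.inclusion hST f) (g := BSeq.inclusion hST g) hX).1 h)

lemma inclusion_surjective (hST : S ⊆ T) (hTS : T ⊆ S) :
    Function.Surjective (inclusion (e := e) hST) := by
  rintro ⟨f⟩
  exact ⟨mk (BSeq.inclusion hTS f), rfl⟩

lemma bGP_le_bGP_inclusion_add (hX : GromovHyperbolic δ X) (hST : S ⊆ T)
    (ξ η : SeqBoundary S e) :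
    bGP S e ξ η ≤ bGP T e (inclusion hST ξ) (inclusion hST η) + ((2 * δ : ℝ) : EReal) := by
  induction ξ using Quot.ind with | mk f => ?_
  induction η using Quot.ind with | mk g => ?_
  calc bGP S e (mk f) (mk g) ≤ seqGP e f.1 g.1 + ((2 * δ : ℝ) : EReal) := bGP_le_seqGP_add hX f g
    _ ≤ _ := by
      gcongr
      exact seqGP_le_bGP (BSeq.inclusion hST f) (BSeq.inclusion hST g)

lemma bGP_inclusion_le_bGP_add (hX : GromovHyperbolic δ X) (hST : S ⊆ T)
    (ξ η : SeqBoundary S e) :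
    bGP T e (inclusion hST ξ) (inclusion hST η) ≤ bGP S e ξ η + ((2 * δ : ℝ) : EReal) := by
  induction ξ using Quot.ind with | mk f => ?_
  induction η using Quot.ind with | mk g => ?_
  calc bGP T e (mk (BSeq.inclusion hST f)) (mk (BSeq.inclusion hST g))
      ≤ seqGP e f.1 g.1 + ((2 * δ : ℝ) : EReal) := bGP_le_seqGP_add hX _ _
    _ ≤ _ := by
      gcongr
      exact seqGP_le_bGP f g

theorem isQuasiSymmetryOnto_inclusion (hX : GromovHyperbolic δ X) (hST : S ⊆ T)
    {d : SeqBoundary S e → SeqBoundary S e → ℝ} {d' : SeqBoundary T e → SeqBoundary T e → ℝ}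
    (hd : IsVisualMetric S e d) (hd' : IsVisualMetric T e d') :
    IsQuasiSymmetryOnto d d' (inclusion hST) := by
  obtain ⟨-, -, -, -, ε, hε, k₁, hk₁, k₂, hk₂, hcomp⟩ := hd
  obtain ⟨-, -, -, -, ε', hε', k₁', hk₁', k₂', hk₂', hcomp'⟩ := hd'
  have hδ := hX.nonneg e
  have hp : 0 < ε' / ε := div_pos hε' hε
  have hpow : ∀ r, visGauge ε r ^ (ε' / ε) = visGauge ε' r := fun r => by
    rw [visGauge_rpow hp, mul_div_cancel₀ _ hε.ne']
  refine isQuasiSymmetryOnto_of_comparable_rpow (inclusion_injective hX hST)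
    (fun ξ η => visGauge_nonneg ε (bGP S e ξ η)) hk₁ hk₂
    (k₁' := k₁' * Real.exp (-(ε' * (2 * δ)))) (k₂' := k₂' * Real.exp (ε' * (2 * δ)))
    (by positivity) (by positivity) hp hcomp fun ξ η => ⟨?_, ?_⟩
  · have := visGauge_le_exp_mul_visGauge hε'.le (bGP_nonneg _ _)
      (bGP_inclusion_le_bGP_add hX hST ξ η)
    rw [hpow]
    calc k₁' * Real.exp (-(ε' * (2 * δ))) * visGauge ε' (bGP S e ξ η)
        ≤ k₁' * Real.exp (-(ε' * (2 * δ))) * (Real.exp (ε' * (2 * δ)) *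
          visGauge ε' (bGP T e (inclusion hST ξ) (inclusion hST η))) := by gcongr
      _ = k₁' * visGauge ε' (bGP T e (inclusion hST ξ) (inclusion hST η)) := by
        rw [← mul_assoc, mul_assoc k₁', ← Real.exp_add, neg_add_cancel, Real.exp_zero, mul_one]
      _ ≤ d' (inclusion hST ξ) (inclusion hST η) := (hcomp' _ _).1
  · have := visGauge_le_exp_mul_visGauge hε'.le (bGP_nonneg _ _)
      (bGP_le_bGP_inclusion_add hX hST ξ η)
    rw [hpow]
    calc d' (inclusion hST ξ) (inclusion hST η)
        ≤ k₂' * visGauge ε' (bGP T e (inclusion hST ξ) (inclusion hST η)) := (hcomp' _ _).2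
      _ ≤ k₂' * (Real.exp (ε' * (2 * δ)) * visGauge ε' (bGP S e ξ η)) := by gcongr
      _ = _ := by ring

end SeqBoundary

end SequentialBoundary


theorem statement8_general (δ : ℝ) :
    ∃ N₀ : ℝ → ℝ → ℝ, IsMorseGauge N₀ ∧
      ∀ (X : Type*) [MetricSpace X], GeodesicSpace X →
        (∀ w x y z : X, gprod w x y ≥ min (gprod w x z) (gprod w z y) - δ) →
        ∀ e : X,
          (∀ (γ : ℝ → X) (L : ℝ), IsGeodesicSeg γ L →
            IsMorseSet N₀ (γ '' Icc 0 L)) ∧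
          (∀ N : ℝ → ℝ → ℝ, IsMorseGauge N → (∀ K C : ℝ, N₀ K C ≤ N K C) →
            morseStratum N e = Set.univ) ∧
          (∀ N : ℝ → ℝ → ℝ, IsMorseGauge N →
            ∃ J : SeqBoundary (morseStratum N e) e →
                SeqBoundary (Set.univ : Set X) e,
              (∀ (u : BSeq (morseStratum N e) e)
                  (v : BSeq (Set.univ : Set X) e),
                  (∀ n, v.1 n = u.1 n) →
                  J (SeqBoundary.mk u) = SeqBoundary.mk v) ∧
              Function.Injective J ∧
              (∀ d d', IsVisualMetric (morseStratum N e) e d →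
                IsVisualMetric (Set.univ : Set X) e d' →
                IsQuasiSymmetryOnto d d' J) ∧
              ((∀ K C : ℝ, N₀ K C ≤ N K C) → Function.Surjective J)) := by
  refine ⟨morseGauge δ, fun K C hK hC => morseGauge_nonneg δ (by linarith) hC, ?_⟩
  intro X _ hG hX e
  refine ⟨fun γ L hγ => hγ.isMorseSet_morseGauge hG hX,
    fun N _ hN => morseStratum_eq_univ hG hX e hN, fun N _ => ?_⟩
  have hST : morseStratum N e ⊆ univ := subset_univ _
  exact ⟨SeqBoundary.inclusion hST, SeqBoundary.inclusion_mk hST,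
    SeqBoundary.inclusion_injective hX hST,
    fun d d' hd hd' => SeqBoundary.isQuasiSymmetryOnto_inclusion hX hST hd hd',
    fun hN => SeqBoundary.inclusion_surjective hST (morseStratum_eq_univ hG hX e hN).ge⟩

/-- in a δ-hyperbolic geodesic space there is a gauge `N₀`
(depending only on δ) such that all geodesics are `N₀`-Morse, `X^(N)_e = X`
for `N ≥ N₀`, and the natural maps `∂X^(N)_e → ∂∞X` are quasi-symmetries onto
their images, surjective for `N ≥ N₀`. -/
theorem statement8 (δ : ℝ) (hδ : 0 ≤ δ) :
    ∃ N₀ : ℝ → ℝ → ℝ, IsMorseGauge N₀ ∧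
      ∀ (X : Type*) [MetricSpace X], GeodesicSpace X →
        (∀ w x y z : X, gprod w x y ≥ min (gprod w x z) (gprod w z y) - δ) →
        ∀ e : X,
          (∀ (γ : ℝ → X) (L : ℝ), IsGeodesicSeg γ L →
            IsMorseSet N₀ (γ '' Icc 0 L)) ∧
          (∀ N : ℝ → ℝ → ℝ, IsMorseGauge N → (∀ K C : ℝ, N₀ K C ≤ N K C) →
            morseStratum N e = Set.univ) ∧
          (∀ N : ℝ → ℝ → ℝ, IsMorseGauge N →
            ∃ J : SeqBoundary (morseStratum N e) e →
                SeqBoundary (Set.univ : Set X) e,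
              (∀ (u : BSeq (morseStratum N e) e)
                  (v : BSeq (Set.univ : Set X) e),
                  (∀ n, v.1 n = u.1 n) →
                  J (SeqBoundary.mk u) = SeqBoundary.mk v) ∧
              Function.Injective J ∧
              (∀ d d', IsVisualMetric (morseStratum N e) e d →
                IsVisualMetric (Set.univ : Set X) e d' →
                IsQuasiSymmetryOnto d d' J) ∧
              ((∀ K C : ℝ, N₀ K C ≤ N K C) → Function.Surjective J)) :=
  statement8_general δ
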